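/- Let φ be a monotone 1-in-3 SAT instance with n variables and m clauses in which every variable occurs in at least one clause, and let G_φ be the associated classified matching instance (ranks ignored). Then there exists a feasible matching in G_φ of cardinality 2n + 6m — i.e., one matching every applicant — if and only if φ has a 1-in-3 satisfying assignment. -/

import Mathlib

open scoped Classical

/-- Applicants of the instance `G_φ`: `av i = aᵢ`, `bv i = bᵢ`,
`ac i j = a_{ij}` and `bc i j = b_{ij}` (the latter two meaningful when `i ∈ C_j`). -/
inductive App (n m : ℕ) where
  | av (i : Fin n) : App n m
  | bv (i : Fin n) : App n m
  | ac (i : Fin n) (j : Fin m) : App n m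
  | bc (i : Fin n) (j : Fin m) : App n m
  deriving DecidableEq, Fintype

/-- Posts of the instance `G_φ`: `pv i = pᵢ`, `pt i = pᵢᵗ`, `pf i = pᵢᶠ`
and `pc j = pⱼᶜ`. -/
inductive Post (n m : ℕ) where
  | pv (i : Fin n) : Post n m
  | pt (i : Fin n) : Post n m
  | pf (i : Fin n) : Post n m
  | pc (j : Fin m) : Post n m
  deriving DecidableEq, Fintype

namespace Red

variable {n m : ℕ}

/-- The rank-1 (first-choice) post of each applicant. -/
def rank1 : App n m → Post n m
  | .av i => .pv i
  | .bv i => .pv i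
  | .ac _ j => .pc j
  | .bc _ j => .pc j

/-- The rank-2 (second-choice) post of each applicant. -/
def rank2 : App n m → Post n m
  | .av i => .pt i
  | .bv i => .pf i
  | .ac i _ => .pt i
  | .bc i _ => .pf i

/-- The rank of a post on an applicant's preference list (3 = unacceptable). -/
def rk (x : App n m) (p : Post n m) : ℕ :=
  if p = rank1 x then 1 else if p = rank2 x then 2 else 3

/-- Only pairs `(i, j)` with `i ∈ C_j` give rise to applicants `a_{ij}`, `b_{ij}`. -/
def Valid (Cl : Fin m → Finset (Fin n)) : App n m → Prop
  | .av _ => True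
  | .bv _ => True
  | .ac i j => i ∈ Cl j
  | .bc i j => i ∈ Cl j

/-- `k_i`: the number of clauses containing variable `i`. -/
def occ (Cl : Fin m → Finset (Fin n)) (i : Fin n) : ℕ :=
  (Finset.univ.filter fun j => i ∈ Cl j).card

/-- `M` is a matching of `G_φ`: each (existing) applicant is assigned to at most one
post on its preference list. -/
def IsMatching (Cl : Fin m → Finset (Fin n)) (M : App n m → Option (Post n m)) : Prop :=
  ∀ x p, M x = some p → Valid Cl x ∧ (p = rank1 x ∨ p = rank2 x)

/-- The number of applicants matched to post `p`. -/
def cnt (M : App n m → Option (Post n m)) (p : Post n m) : ℕ :=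
  (Finset.univ.filter fun x => M x = some p).card

/-- `M` is feasible: all post quotas and all class quotas of `G_φ` are respected. -/
def Feasible (Cl : Fin m → Finset (Fin n)) (M : App n m → Option (Post n m)) : Prop :=
  -- post `pᵢ` has quota 1 and no classes
  (∀ i, cnt M (.pv i) ≤ 1) ∧
  -- post `pⱼᶜ` has quota 3
  (∀ j, cnt M (.pc j) ≤ 3) ∧
  -- class `S_{ij} = {a_{ij}, b_{ij}}` of `pⱼᶜ`, quota 1
  (∀ j, ∀ i ∈ Cl j,
    (({App.ac i j, App.bc i j} : Finset (App n m)).filter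
      fun x => M x = some (.pc j)).card ≤ 1) ∧
  -- class `S_{1j} = {a_{ij} : i ∈ C_j}` of `pⱼᶜ`, quota 1
  (∀ j, ((Cl j).filter fun i => M (.ac i j) = some (.pc j)).card ≤ 1) ∧
  -- class `S_{2j} = {b_{ij} : i ∈ C_j}` of `pⱼᶜ`, quota 2
  (∀ j, ((Cl j).filter fun i => M (.bc i j) = some (.pc j)).card ≤ 2) ∧
  -- post `pᵢᵗ` has quota `k_i`
  (∀ i, cnt M (.pt i) ≤ occ Cl i) ∧
  -- class `Sⱼᵗ = {a_{ij}, aᵢ}` of `pᵢᵗ`, quota 1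
  (∀ i, ∀ j, i ∈ Cl j →
    (({App.ac i j, App.av i} : Finset (App n m)).filter
      fun x => M x = some (.pt i)).card ≤ 1) ∧
  -- post `pᵢᶠ` has quota `k_i`
  (∀ i, cnt M (.pf i) ≤ occ Cl i) ∧
  -- class `Sⱼᶠ = {b_{ij}, bᵢ}` of `pᵢᶠ`, quota 1
  (∀ i, ∀ j, i ∈ Cl j →
    (({App.bc i j, App.bv i} : Finset (App n m)).filter
      fun x => M x = some (.pf i)).card ≤ 1)

/-- Applicant `x` prefers matching `M` to matching `M'`. -/
def Prefers (M M' : App n m → Option (Post n m)) (x : App n m) : Prop :=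
  ∃ p, M x = some p ∧ (M' x = none ∨ ∃ p', M' x = some p' ∧ rk x p < rk x p')

/-- `M'` is more popular than `M`. -/
def MorePopular (M' M : App n m → Option (Post n m)) : Prop :=
  (Finset.univ.filter fun x => Prefers M M' x).card <
    (Finset.univ.filter fun x => Prefers M' M x).card

/-- `M` is popular among all feasible matchings of `G_φ`. -/
def Popular (Cl : Fin m → Finset (Fin n)) (M : App n m → Option (Post n m)) : Prop :=
  IsMatching Cl M ∧ Feasible Cl M ∧
    ∀ M', IsMatching Cl M' → Feasible Cl M' → ¬ MorePopular M' M

/-- `φ` has a 1-in-3 satisfying assignment. -/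
def OneInThree (Cl : Fin m → Finset (Fin n)) : Prop :=
  ∃ η : Fin n → Bool, ∀ j, ((Cl j).filter fun i => η i = true).card = 1

end Red

/-! In a matching that covers all `2n + 6m` applicants, `aᵢ` and `bᵢ` share the single seat of
`pᵢ`, so one of them leaves for its second post; put `η i := (aᵢ sits at pᵢᵗ)`. The quota-1
classes `Sⱼᵗ`, `Sⱼᶠ` and `S_{ij}` then send `a_{ij}` to `pⱼᶜ` exactly when `η i` holds and `b_{ij}`
exactly when it fails, so the quotas 1 and 2 of `S_{1j}` and `S_{2j}` on a clause of three
variables force exactly one true variable. Conversely, an assignment prescribes this matching;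
the quota `kᵢ` of `pᵢᵗ` and `pᵢᶠ` suffices since each of them receives either `aᵢ` (resp. `bᵢ`)
alone or one applicant per clause containing `i`. -/

theorem Finset.card_filter_pair_le_one_iff {α : Type*} [DecidableEq α] {p : α → Prop}
    [DecidablePred p] {x y : α} (hxy : x ≠ y) :
    (({x, y} : Finset α).filter p).card ≤ 1 ↔ ¬(p x ∧ p y) := by
  rw [Finset.filter_insert, Finset.filter_singleton]
  split_ifs <;> simp_all

namespace Red

variable {n m : ℕ} {Cl : Fin m → Finset (Fin n)}

def appEquiv : App n m ≃ (Fin n ⊕ Fin n) ⊕ (Fin n × Fin m ⊕ Fin n × Fin m) where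
  toFun
    | .av i => .inl (.inl i)
    | .bv i => .inl (.inr i)
    | .ac i j => .inr (.inl (i, j))
    | .bc i j => .inr (.inr (i, j))
  invFun
    | .inl (.inl i) => .av i
    | .inl (.inr i) => .bv i
    | .inr (.inl (i, j)) => .ac i j
    | .inr (.inr (i, j)) => .bc i j
  left_inv x := by cases x <;> rfl
  right_inv s := by rcases s with (_ | _) | (_ | _) <;> rfl

theorem sum_app {β : Type*} [AddCommMonoid β] (f : App n m → β) :
    ∑ x, f x = ∑ i, f (.av i) + ∑ i, f (.bv i) + ∑ j, ∑ i, f (.ac i j) + ∑ j, ∑ i, f (.bc i j) := by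
  rw [← appEquiv.symm.sum_comp]
  simp only [Fintype.sum_sum_type, Fintype.sum_prod_type_right, appEquiv, Equiv.coe_fn_symm_mk]
  ac_rfl

theorem card_valid (h3 : ∀ j, (Cl j).card = 3) :
    (Finset.univ.filter fun x => Valid Cl x).card = 2 * n + 6 * m := by
  have hav : (Finset.univ.filter fun i => Valid Cl (.av i : App n m)) = Finset.univ :=
    Finset.filter_true_of_mem fun _ _ => trivial
  have hbv : (Finset.univ.filter fun i => Valid Cl (.bv i : App n m)) = Finset.univ :=
    Finset.filter_true_of_mem fun _ _ => trivial
  have hac (j : Fin m) : (Finset.univ.filter fun i => Valid Cl (.ac i j)) = Cl j := by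
    ext; rw [Finset.mem_filter]; simp [Valid]
  have hbc (j : Fin m) : (Finset.univ.filter fun i => Valid Cl (.bc i j)) = Cl j := by
    ext; rw [Finset.mem_filter]; simp [Valid]
  rw [Finset.card_filter, sum_app]
  simp only [← Finset.card_filter, hav, hbv, hac, hbc, h3, Finset.card_univ, Fintype.card_fin,
    Finset.sum_const, smul_eq_mul]
  ring

def ofAssignment (Cl : Fin m → Finset (Fin n)) (η : Fin n → Bool) :
    App n m → Option (Post n m)
  | .av i => some (if η i then .pt i else .pv i)
  | .bv i => some (if η i then .pv i else .pf i)
  | .ac i j => if i ∈ Cl j then some (if η i then .pc j else .pt i) else none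
  | .bc i j => if i ∈ Cl j then some (if η i then .pf i else .pc j) else none

section ofAssignment

variable {η : Fin n → Bool}

theorem isMatching_ofAssignment : IsMatching Cl (ofAssignment Cl η) := by
  intro x p h
  cases x <;> simp only [ofAssignment] at h <;> split_ifs at h <;> simp_all [Valid, rank1, rank2]

theorem isSome_ofAssignment_iff (x : App n m) : (ofAssignment Cl η x).isSome ↔ Valid Cl x := by
  cases x <;> simp only [ofAssignment, Valid] <;> split_ifs <;> simp_all

theorem filter_ofAssignment_eq_pv (i : Fin n) :
    Finset.univ.filter (fun x => ofAssignment Cl η x = some (.pv i)) =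
      {if η i then .bv i else .av i} := by
  ext x; rw [Finset.mem_filter]
  cases x <;> simp only [ofAssignment] <;> split_ifs <;> aesop

theorem filter_ofAssignment_eq_pt (i : Fin n) :
    Finset.univ.filter (fun x => ofAssignment Cl η x = some (.pt i)) =
      if η i then {.av i} else (Finset.univ.filter fun j => i ∈ Cl j).image (.ac i) := by
  ext x; rw [Finset.mem_filter]
  cases x <;> simp only [ofAssignment] <;> split_ifs <;> aesop

theorem filter_ofAssignment_eq_pf (i : Fin n) :
    Finset.univ.filter (fun x => ofAssignment Cl η x = some (.pf i)) =
      if η i then (Finset.univ.filter fun j => i ∈ Cl j).image (.bc i) else {.bv i} := by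
  ext x; rw [Finset.mem_filter]
  cases x <;> simp only [ofAssignment] <;> split_ifs <;> aesop

theorem filter_ofAssignment_eq_pc (j : Fin m) :
    Finset.univ.filter (fun x => ofAssignment Cl η x = some (.pc j)) =
      (Cl j).image fun i => if η i then .ac i j else .bc i j := by
  ext x; rw [Finset.mem_filter]
  cases x <;> simp only [ofAssignment] <;> split_ifs <;> aesop

theorem feasible_ofAssignment (h3 : ∀ j, (Cl j).card = 3) (hocc : ∀ i, ∃ j, i ∈ Cl j)
    (hη : ∀ j, ((Cl j).filter fun i => η i = true).card = 1) :
    Feasible Cl (ofAssignment Cl η) := by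
  have hocc_pos (i : Fin n) : 1 ≤ occ Cl i :=
    Finset.card_pos.2 <| (hocc i).imp fun j hj => by simpa using hj
  have hac (j : Fin m) :
      (Cl j).filter (fun i => ofAssignment Cl η (.ac i j) = some (.pc j)) =
        (Cl j).filter fun i => η i = true :=
    Finset.filter_congr fun i hi => by by_cases h : η i <;> simp [ofAssignment, hi, h]
  have hbc (j : Fin m) :
      (Cl j).filter (fun i => ofAssignment Cl η (.bc i j) = some (.pc j)) =
        (Cl j).filter fun i => ¬η i = true :=
    Finset.filter_congr fun i hi => by by_cases h : η i <;> simp [ofAssignment, hi, h]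
  refine ⟨fun i => ?_, fun j => ?_, fun j i hi => ?_, fun j => ?_, fun j => ?_, fun i => ?_,
    fun i j hij => ?_, fun i => ?_, fun i j hij => ?_⟩
  · simp [cnt, filter_ofAssignment_eq_pv]
  · rw [cnt, filter_ofAssignment_eq_pc, ← h3 j]
    exact Finset.card_image_le
  · rw [Finset.card_filter_pair_le_one_iff (by simp)]
    by_cases h : η i <;> simp [ofAssignment, hi, h]
  · rw [hac, hη]
  · have hsplit := Finset.card_filter_add_card_filter_not (s := Cl j) (p := fun i => η i = true)
    rw [hη j, h3 j] at hsplit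
    rw [hbc]
    omega
  · rw [cnt, filter_ofAssignment_eq_pt]
    split_ifs
    · simpa using hocc_pos i
    · exact Finset.card_image_le
  · rw [Finset.card_filter_pair_le_one_iff (by simp)]
    by_cases h : η i <;> simp [ofAssignment, hij, h]
  · rw [cnt, filter_ofAssignment_eq_pf]
    split_ifs
    · exact Finset.card_image_le
    · simpa using hocc_pos i
  · rw [Finset.card_filter_pair_le_one_iff (by simp)]
    by_cases h : η i <;> simp [ofAssignment, hij, h]

end ofAssignment

def IsComplete (Cl : Fin m → Finset (Fin n)) (M : App n m → Option (Post n m)) : Prop :=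
  ∀ x, Valid Cl x → M x = some (rank1 x) ∨ M x = some (rank2 x)

section complete

variable {M : App n m → Option (Post n m)}

theorem IsMatching.isComplete (hM : IsMatching Cl M) (h3 : ∀ j, (Cl j).card = 3)
    (hcard : (Finset.univ.filter fun x => (M x).isSome).card = 2 * n + 6 * m) :
    IsComplete Cl M := by
  intro x hx
  have hsub : (Finset.univ.filter fun x => (M x).isSome) ⊆ Finset.univ.filter (Valid Cl) := by
    intro y hy
    obtain ⟨p, hp⟩ := Option.isSome_iff_exists.1 (Finset.mem_filter.1 hy).2
    exact Finset.mem_filter.2 ⟨Finset.mem_univ y, (hM y p hp).1⟩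
  have heq := Finset.eq_of_subset_of_card_le hsub (by rw [card_valid h3, hcard])
  have hmatched : (M x).isSome := by
    have hmem : x ∈ Finset.univ.filter (Valid Cl) := Finset.mem_filter.2 ⟨Finset.mem_univ x, hx⟩
    rw [← heq, Finset.mem_filter] at hmem
    exact hmem.2
  obtain ⟨p, hp⟩ := Option.isSome_iff_exists.1 hmatched
  rcases (hM x p hp).2 with rfl | rfl
  exacts [.inl hp, .inr hp]

variable (hF : Feasible Cl M) (hall : IsComplete Cl M)
include hF hall

theorem ac_eq_pc_of_av_eq_pt {i : Fin n} {j : Fin m} (hij : i ∈ Cl j)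
    (h : M (.av i) = some (.pt i)) : M (.ac i j) = some (.pc j) := by
  obtain ⟨-, -, -, -, -, -, hSt, -, -⟩ := hF
  refine (hall (.ac i j) hij).resolve_right fun hac => ?_
  exact (Finset.card_filter_pair_le_one_iff (by simp)).1 (hSt i j hij) ⟨hac, h⟩

theorem bc_eq_pc_of_av_ne_pt {i : Fin n} {j : Fin m} (hij : i ∈ Cl j)
    (h : M (.av i) ≠ some (.pt i)) : M (.bc i j) = some (.pc j) := by
  obtain ⟨hpv, -, -, -, -, -, -, -, hSf⟩ := hF
  have hav : M (.av i) = some (.pv i) := (hall (.av i) trivial).resolve_right h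
  have hbv : M (.bv i) = some (.pf i) := (hall (.bv i) trivial).resolve_left fun hbv => by
    simpa using Finset.card_le_one.1 (hpv i) (.av i) (by simpa using hav) (.bv i)
      (by simpa [rank1] using hbv)
  refine (hall (.bc i j) hij).resolve_right fun hbc => ?_
  exact (Finset.card_filter_pair_le_one_iff (by simp)).1 (hSf i j hij) ⟨hbc, hbv⟩

theorem ac_eq_pc_iff {i : Fin n} {j : Fin m} (hij : i ∈ Cl j) :
    M (.ac i j) = some (.pc j) ↔ M (.av i) = some (.pt i) := by
  refine ⟨fun hac => by_contra fun h => ?_, ac_eq_pc_of_av_eq_pt hF hall hij⟩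
  have hbc := bc_eq_pc_of_av_ne_pt hF hall hij h
  obtain ⟨-, -, hS, -⟩ := hF
  exact (Finset.card_filter_pair_le_one_iff (by simp)).1 (hS j i hij) ⟨hac, hbc⟩

theorem bc_eq_pc_iff {i : Fin n} {j : Fin m} (hij : i ∈ Cl j) :
    M (.bc i j) = some (.pc j) ↔ M (.av i) ≠ some (.pt i) := by
  refine ⟨fun hbc h => ?_, bc_eq_pc_of_av_ne_pt hF hall hij⟩
  have hac := ac_eq_pc_of_av_eq_pt hF hall hij h
  obtain ⟨-, -, hS, -⟩ := hF
  exact (Finset.card_filter_pair_le_one_iff (by simp)).1 (hS j i hij) ⟨hac, hbc⟩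

theorem oneInThree_of_isComplete (h3 : ∀ j, (Cl j).card = 3) : OneInThree Cl := by
  refine ⟨fun i => decide (M (.av i) = some (.pt i)), fun j => ?_⟩
  have hsplit := Finset.card_filter_add_card_filter_not (s := Cl j)
    (p := fun i => decide (M (.av i) = some (.pt i)) = true)
  have ⟨_, _, _, hS1, hS2, _⟩ := hF
  have htrue := hS1 j
  have hfalse := hS2 j
  rw [Finset.filter_congr fun i hi => (ac_eq_pc_iff hF hall hi).trans decide_eq_true_iff.symm]
    at htrue
  rw [Finset.filter_congr fun i hi => (bc_eq_pc_iff hF hall hi).trans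
    (not_congr decide_eq_true_iff).symm] at hfalse
  rw [h3 j] at hsplit
  beta_reduce
  omega

end complete

end Red

/-- for a monotone 1-in-3 SAT instance `φ` (clauses of size exactly 3,
every variable occurring in some clause), the instance `G_φ` (ranks ignored) admits a
feasible matching of cardinality `2n + 6m` — i.e. matching every applicant — iff `φ`
has a 1-in-3 satisfying assignment. -/
theorem stmt16 (n m : ℕ) (Cl : Fin m → Finset (Fin n))
    (h3 : ∀ j, (Cl j).card = 3) (hocc : ∀ i, ∃ j, i ∈ Cl j) :
    (∃ M : App n m → Option (Post n m), Red.IsMatching Cl M ∧ Red.Feasible Cl M ∧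
      (Finset.univ.filter fun x => (M x).isSome).card = 2 * n + 6 * m) ↔
    Red.OneInThree Cl := by
  constructor
  · rintro ⟨M, hM, hF, hcard⟩
    exact Red.oneInThree_of_isComplete hF (hM.isComplete h3 hcard) h3
  · rintro ⟨η, hη⟩
    refine ⟨Red.ofAssignment Cl η, Red.isMatching_ofAssignment,
      Red.feasible_ofAssignment h3 hocc hη, ?_⟩
    rw [Finset.filter_congr fun x _ => Red.isSome_ofAssignment_iff x, Red.card_valid h3]
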